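/- arXiv:0803.0956 — 3 statements merged into one kernel-verified Lean document; each statement's English description precedes it below -/
import Mathlib

section
/- A vertex v of a finite simple graph G is simplicial (its neighborhood is a clique) if and only if v does not belong to any minimal separator of G. -/
open SimpleGraph

variable {V : Type*}

/-- `S` separates `u` and `w` in `G`: every walk from `u` to `w` meets `S`. -/
def Separates (G : SimpleGraph V) (S : Set V) (u w : V) : Prop :=
  ∀ p : G.Walk u w, ∃ x ∈ p.support, x ∈ S

/-- `S` is a minimal `{u,w}`-separator. -/
def IsMinUWSeparator (G : SimpleGraph V) (S : Set V) (u w : V) : Prop :=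
  u ≠ w ∧ ¬ G.Adj u w ∧ u ∉ S ∧ w ∉ S ∧ Separates G S u w ∧
    ∀ S' ⊂ S, ¬ Separates G S' u w

/-- `S` is a minimal separator of `G`. -/
def IsMinSeparator (G : SimpleGraph V) (S : Set V) : Prop :=
  ∃ u w : V, IsMinUWSeparator G S u w

/-- A vertex is simplicial if its neighborhood is a clique. -/
def IsSimplicial (G : SimpleGraph V) (v : V) : Prop :=
  G.IsClique (G.neighborSet v)

/-- A maximal clique (as a vertex set). -/
def IsMaxClique (G : SimpleGraph V) (s : Set V) : Prop :=
  G.IsClique s ∧ ∀ t : Set V, G.IsClique t → s ⊆ t → s = t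

/-- A graph is chordal if it has no induced cycle of length at least 4. -/
def Chordal (G : SimpleGraph V) : Prop :=
  ∀ n : ℕ, 4 ≤ n → IsEmpty (SimpleGraph.cycleGraph n ↪g G)

/-- The type of maximal cliques of `G`. -/
abbrev MaxCliques (G : SimpleGraph V) := {s : Set V // IsMaxClique G s}

/-- `T` is a clique tree of `G`: a tree on the maximal cliques such that for each vertex
the cliques containing it induce a connected subgraph. -/
def IsCliqueTree (G : SimpleGraph V) (T : SimpleGraph (MaxCliques G)) : Prop :=
  T.IsTree ∧ ∀ v : V, (T.induce {Q : MaxCliques G | v ∈ Q.1}).Connected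

/-- The set `X` induces a path in `T` (assuming `T` is a tree: connected with max degree 2). -/
def InducesPath {α : Type*} (T : SimpleGraph α) (X : Set α) : Prop :=
  (T.induce X).Connected ∧ ∀ x : X, ((T.induce X).neighborSet x).ncard ≤ 2

/-- `T` is a clique path tree of `G`. -/
def IsCliquePathTree (G : SimpleGraph V) (T : SimpleGraph (MaxCliques G)) : Prop :=
  T.IsTree ∧ ∀ v : V, InducesPath T {Q : MaxCliques G | v ∈ Q.1}

/-- `G` is a path graph: the empty graph, or a graph admitting a clique path tree. -/
def IsPathGraph (G : SimpleGraph V) : Prop :=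
  IsEmpty V ∨ ∃ T : SimpleGraph (MaxCliques G), IsCliquePathTree G T

/-- `G` is an interval graph: intersection graph of closed real intervals. -/
def IsIntervalGraph (G : SimpleGraph V) : Prop :=
  ∃ f : V → Set ℝ, (∀ v, ∃ a b : ℝ, a ≤ b ∧ f v = Set.Icc a b) ∧
    ∀ u v : V, u ≠ v → (G.Adj u v ↔ (f u ∩ f v).Nonempty)

/-- `a` is a middle of `b, c`: every walk from `b` to `c` meets `N(a)`. -/
def IsMiddle (G : SimpleGraph V) (a b c : V) : Prop :=
  ∀ p : G.Walk b c, ∃ x ∈ p.support, G.Adj a x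

/-- `a, b, c` form an asteroidal triple. -/
def AsteroidalTriple (G : SimpleGraph V) (a b c : V) : Prop :=
  a ≠ b ∧ a ≠ c ∧ b ≠ c ∧ ¬ G.Adj a b ∧ ¬ G.Adj a c ∧ ¬ G.Adj b c ∧
  (∃ p : G.Walk b c, ∀ x ∈ p.support, ¬ G.Adj a x) ∧
  (∃ p : G.Walk a c, ∀ x ∈ p.support, ¬ G.Adj b x) ∧
  (∃ p : G.Walk a b, ∀ x ∈ p.support, ¬ G.Adj c x)

/-- The closed neighborhood clique `Q_v` of a simplicial vertex. -/
def Qv (G : SimpleGraph V) (v : V) : Set V := insert v (G.neighborSet v)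

/-- `S_v`: the vertices of `Q_v` having a neighbor outside `Q_v`. -/
def Sv (G : SimpleGraph V) (v : V) : Set V :=
  {x | x ∈ Qv G v ∧ ∃ y, y ∉ Qv G v ∧ G.Adj x y}

/-- A simplicial vertex is special if `S_v` is an inclusion-maximal minimal separator. -/
def IsSpecial (G : SimpleGraph V) (v : V) : Prop :=
  IsSimplicial G v ∧ IsMinSeparator G (Sv G v) ∧
    ∀ S : Set V, IsMinSeparator G S → Sv G v ⊆ S → S = Sv G v

/-- Connected components of `G ∖ S` containing a vertex complete to `S`. -/
def CompleteComponents (G : SimpleGraph V) (S : Set V) :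
    Set ((G.induce (Sᶜ : Set V)).ConnectedComponent) :=
  {C | ∃ x : (Sᶜ : Set V), (G.induce (Sᶜ : Set V)).connectedComponentMk x = C ∧
        S ⊆ G.neighborSet x.1}

/-- The wheel graph: an `n`-cycle plus a universal vertex (`none`). -/
def wheelGraph (n : ℕ) : SimpleGraph (Option (Fin n)) :=
  SimpleGraph.fromRel (fun a b =>
    (∃ i j : Fin n, a = some i ∧ b = some j ∧ (SimpleGraph.cycleGraph n).Adj i j) ∨
    (a = none ∧ b ≠ none))

/-- `y` lies on the tree-path between `x` and `z` in `T`. -/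
def OnTreePath {α : Type*} (T : SimpleGraph α) (x y z : α) : Prop :=
  ∃ p : T.Walk x z, p.IsPath ∧ y ∈ p.support

/-!
A simplicial vertex `v` can be deleted from any separator of two vertices other than `v`: on a
walk, a detour `a – v – b` through `v` can be replaced by the edge `ab`, since `N(v)` is a clique.
So no minimal separator contains `v`. Conversely, if `u, w ∈ N(v)` are distinct and non-adjacent,
then all vertices but `u` and `w` separate them; a minimal separator inside that set must meet the
walk `u – v – w`, hence contains `v`.
-/

namespace Separates

variable {G : SimpleGraph V} {S : Set V} {u w : V}

lemma compl_pair (huw : u ≠ w) (hadj : ¬G.Adj u w) : Separates G ({u, w} : Set V)ᶜ u w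
  | .nil => absurd rfl huw
  | .cons h p => ⟨_, List.mem_cons_of_mem _ p.start_mem_support, by
      simp only [Set.mem_compl_iff, Set.mem_insert_iff, Set.mem_singleton_iff, not_or]
      exact ⟨(G.ne_of_adj h).symm, fun hw => hadj (hw ▸ h)⟩⟩

lemma exists_minimal [Finite V] (h : Separates G S u w) :
    ∃ T ⊆ S, Separates G T u w ∧ ∀ T' ⊂ T, ¬Separates G T' u w := by
  obtain ⟨T, hTS, hT⟩ := exists_minimal_le_of_wellFoundedLT (fun T => Separates G T u w) S h
  exact ⟨T, hTS, hT.prop, fun _ => hT.not_prop_of_lt⟩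

end Separates

namespace IsSimplicial

variable {G : SimpleGraph V} {v : V}

-- Each detour `a – v – b` is replaced by the edge `ab` (or dropped if `a = b`); generalising the
-- start to a neighbour `u` of `x` lets the induction absorb a detour at the first step.
lemma exists_walk_avoiding (hv : IsSimplicial G v) {x w : V} (p : G.Walk x w) (hw : w ≠ v) :
    ∀ u, u ≠ v → (u = x ∨ G.Adj u x) →
      ∃ q : G.Walk u w, v ∉ q.support ∧ q.support ⊆ u :: p.support := by
  induction p with
  | nil =>
    rintro u hu (rfl | hadj)
    · exact ⟨.nil, by simpa using hu.symm, by simp⟩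
    · exact ⟨.cons hadj .nil, by simp [hu.symm, hw.symm], by simp⟩
  | @cons x y z hxy p ih =>
    rintro u hu hux
    by_cases hx : x = v
    · subst hx
      have huy : u = y ∨ G.Adj u y := by
        rcases hux with rfl | hux
        · exact absurd rfl hu
        by_cases huy : u = y
        · exact .inl huy
        · exact .inr (hv hux.symm hxy huy)
      obtain ⟨q, hqv, hqp⟩ := ih hw u hu huy
      exact ⟨q, hqv, List.Subset.trans hqp (List.cons_subset_cons _ (List.subset_cons_self _ _))⟩
    · obtain ⟨q, hqv, hqp⟩ := ih hw x hx (.inr hxy)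
      rcases hux with rfl | hux
      · exact ⟨q, hqv, List.Subset.trans hqp (List.subset_cons_self _ _)⟩
      · exact ⟨.cons hux q, by simp [hu.symm, hqv], List.cons_subset_cons _ hqp⟩

lemma separates_diff_singleton (hv : IsSimplicial G v) {S : Set V} {u w : V}
    (h : Separates G S u w) (hu : u ≠ v) (hw : w ≠ v) : Separates G (S \ {v}) u w := by
  intro p
  obtain ⟨q, hqv, hqp⟩ := hv.exists_walk_avoiding p hw u hu (.inl rfl)
  obtain ⟨x, hxq, hxS⟩ := h q
  refine ⟨x, ?_, hxS, fun hxv => hqv (Set.mem_singleton_iff.mp hxv ▸ hxq)⟩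
  rcases List.mem_cons.mp (hqp hxq) with rfl | hxp
  · exact p.start_mem_support
  · exact hxp

lemma notMem_of_isMinUWSeparator (hv : IsSimplicial G v) {S : Set V} {u w : V}
    (hS : IsMinUWSeparator G S u w) : v ∉ S := by
  obtain ⟨-, -, huS, hwS, hsep, hmin⟩ := hS
  intro hvS
  exact hmin _ (Set.sdiff_singleton_ssubset.mpr hvS)
    (hv.separates_diff_singleton hsep (ne_of_mem_of_not_mem hvS huS).symm
      (ne_of_mem_of_not_mem hvS hwS).symm)

end IsSimplicial

lemma exists_isMinSeparator_mem_of_not_isSimplicial [Finite V] {G : SimpleGraph V} {v : V}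
    (hv : ¬IsSimplicial G v) : ∃ S, IsMinSeparator G S ∧ v ∈ S := by
  obtain ⟨u, hu, w, hw, huw, hadj⟩ :
      ∃ u ∈ G.neighborSet v, ∃ w ∈ G.neighborSet v, u ≠ w ∧ ¬G.Adj u w := by
    simpa [IsSimplicial, SimpleGraph.IsClique, Set.Pairwise] using hv
  obtain ⟨S, hS, hsep, hmin⟩ := (Separates.compl_pair huw hadj).exists_minimal
  have huS : u ∉ S := fun h => hS h (.inl rfl)
  have hwS : w ∉ S := fun h => hS h (.inr rfl)
  refine ⟨S, ⟨u, w, huw, hadj, huS, hwS, hsep, hmin⟩, ?_⟩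
  obtain ⟨x, hx, hxS⟩ := hsep (.cons (G.adj_symm hu) (.cons hw .nil))
  change x ∈ [u, v, w] at hx
  simp only [List.mem_cons, List.not_mem_nil, or_false] at hx
  rcases hx with rfl | rfl | rfl
  exacts [absurd hxS huS, hxS, absurd hxS hwS]

theorem stmt0 [Fintype V] (G : SimpleGraph V) (v : V) :
    IsSimplicial G v ↔ ¬ ∃ S : Set V, IsMinSeparator G S ∧ v ∈ S :=
  ⟨fun hv ⟨_, ⟨_, _, hS⟩, hvS⟩ => hv.notMem_of_isMinUWSeparator hS hvS,
    Not.imp_symm exists_isMinSeparator_mem_of_not_isSimplicial⟩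
end

section
/- In a chordal graph, every minimal separator is a clique. -/
open SimpleGraph

variable {V : Type*}

/-!
Let `S` be a minimal `u`–`w` separator containing non-adjacent vertices `a` and `b`. By
minimality, each of `a` and `b` has a neighbour in the component `C_u` of `u` in `G - S` and in
the component `C_w` of `w`. A shortest `a`–`b` walk through `C_u` and one through `C_w` are
induced paths of length at least two whose interiors lie in `C_u` and `C_w` respectively; since
no edge joins `C_u` and `C_w`, together they form an induced cycle of length at least four.
-/

theorem SimpleGraph.cycleGraph_adj_iff_of_lt {n : ℕ} {i j : Fin n} (hij : i < j) :
    (cycleGraph n).Adj i j ↔ (j : ℕ) = i + 1 ∨ ((i : ℕ) = 0 ∧ (j : ℕ) = n - 1) := by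
  rw [cycleGraph_adj', Fin.coe_sub_iff_lt.2 hij, Fin.coe_sub_iff_le.2 hij.le]
  have := j.isLt
  have : (i : ℕ) < j := hij
  omega

theorem not_chordal_of_induced_cycle {G : SimpleGraph V} {n : ℕ} (hn : 4 ≤ n) (f : ℕ → V)
    (hinj : ∀ ⦃i j⦄, i < j → j < n → f i ≠ f j)
    (hadj : ∀ ⦃i j⦄, i < j → j < n → (G.Adj (f i) (f j) ↔ j = i + 1 ∨ (i = 0 ∧ j = n - 1))) :
    ¬ Chordal G := by
  intro hG
  refine (hG n hn).false ⟨⟨fun i : Fin n => f i, fun i j hij => ?_⟩, fun {i j} => ?_⟩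
  · by_contra hne
    rcases Fin.lt_or_lt_of_ne hne with h | h
    · exact hinj h j.isLt hij
    · exact hinj h i.isLt hij.symm
  · rcases lt_trichotomy i j with h | rfl | h
    · rw [cycleGraph_adj_iff_of_lt h]; exact hadj h j.isLt
    · simp
    · rw [G.adj_comm, (cycleGraph n).adj_comm, cycleGraph_adj_iff_of_lt h]
      exact hadj h i.isLt

namespace SimpleGraph.Walk

variable {G : SimpleGraph V} {a b : V}

def IsInducedPath (p : G.Walk a b) : Prop :=
  ∀ ⦃i j⦄, i < j → j ≤ p.length →
    p.getVert i ≠ p.getVert j ∧ (G.Adj (p.getVert i) (p.getVert j) → j = i + 1)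

theorem IsInducedPath.adj_getVert_iff {p : G.Walk a b} (hp : p.IsInducedPath) {i j : ℕ}
    (hij : i < j) (hj : j ≤ p.length) : G.Adj (p.getVert i) (p.getVert j) ↔ j = i + 1 :=
  ⟨(hp hij hj).2, by rintro rfl; exact p.adj_getVert_succ (by omega)⟩

theorem two_le_length_of_not_adj (p : G.Walk a b) (hab : a ≠ b) (hnadj : ¬ G.Adj a b) :
    2 ≤ p.length := by
  rcases p with _ | ⟨h, _ | ⟨_, _⟩⟩ <;> simp_all

theorem support_take_subset (p : G.Walk a b) (i : ℕ) : (p.take i).support ⊆ p.support := by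
  rw [support_take]; exact List.take_subset _ _

theorem support_drop_subset (p : G.Walk a b) (i : ℕ) : (p.drop i).support ⊆ p.support := by
  rw [drop_support_eq_support_drop_min]; exact List.drop_subset _ _

theorem exists_shorter_of_getVert_eq (p : G.Walk a b) {i j : ℕ} (hij : i < j)
    (hj : j ≤ p.length) (h : p.getVert i = p.getVert j) :
    ∃ q : G.Walk a b, q.support ⊆ p.support ∧ q.length < p.length := by
  refine ⟨(p.take i).append ((p.drop j).copy h.symm rfl), fun z hz => ?_, ?_⟩
  · rcases (mem_support_append_iff _ _).1 hz with hz | hz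
    · exact p.support_take_subset i hz
    · exact p.support_drop_subset j (by simpa using hz)
  · simp only [length_append, take_length, length_copy, drop_length]
    omega

theorem exists_shorter_of_adj_getVert (p : G.Walk a b) {i j : ℕ} (hij : i + 1 < j)
    (hj : j ≤ p.length) (h : G.Adj (p.getVert i) (p.getVert j)) :
    ∃ q : G.Walk a b, q.support ⊆ p.support ∧ q.length < p.length := by
  refine ⟨(p.take i).append (cons h (p.drop j)), fun z hz => ?_, ?_⟩
  · rcases (mem_support_append_iff _ _).1 hz with hz | hz
    · exact p.support_take_subset i hz
    · rw [support_cons, List.mem_cons] at hz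
      rcases hz with rfl | hz
      · exact p.getVert_mem_support i
      · exact p.support_drop_subset j hz
  · simp only [length_append, take_length, length_cons, drop_length]
    omega

theorem exists_isInducedPath_support_subset (p : G.Walk a b) :
    ∃ q : G.Walk a b, q.support ⊆ p.support ∧ q.IsInducedPath := by
  induction h : p.length using Nat.strong_induction_on generalizing p with
  | _ n ih =>
  by_cases hp : p.IsInducedPath
  · exact ⟨p, List.Subset.refl _, hp⟩
  obtain ⟨q, hqp, hq⟩ : ∃ q : G.Walk a b, q.support ⊆ p.support ∧ q.length < p.length := by
    simp only [IsInducedPath, not_forall, not_and_or, not_not] at hp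
    obtain ⟨i, j, hij, hj, h | ⟨h, hne⟩⟩ := hp
    · exact p.exists_shorter_of_getVert_eq hij hj h
    · exact p.exists_shorter_of_adj_getVert (by omega) hj h
  obtain ⟨r, hrq, hr⟩ := ih _ (h ▸ hq) q rfl
  exact ⟨r, List.Subset.trans hrq hqp, hr⟩

theorem not_chordal_of_isInducedPath_of_isInducedPath {p q : G.Walk a b}
    (hp : p.IsInducedPath) (hq : q.IsInducedPath) (hab : a ≠ b) (hnadj : ¬ G.Adj a b)
    (hpq : ∀ ⦃i j⦄, 0 < i → i < p.length → 0 < j → j < q.length →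
      p.getVert i ≠ q.getVert j ∧ ¬ G.Adj (p.getVert i) (q.getVert j)) :
    ¬ Chordal G := by
  have hp2 := p.two_le_length_of_not_adj hab hnadj
  have hq2 := q.two_le_length_of_not_adj hab hnadj
  set n := p.length + q.length
  let f : ℕ → V := fun i => if i ≤ p.length then p.getVert i else q.getVert (n - i)
  have hfp : ∀ i ≤ p.length, f i = p.getVert i := fun i hi => if_pos hi
  have hfq : ∀ i, p.length ≤ i → f i = q.getVert (n - i) := by
    intro i hi
    rcases hi.eq_or_lt with rfl | hi
    · simp [f, show n - p.length = q.length by omega]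
    · exact if_neg (by omega)
  have key : ∀ ⦃i j⦄, i < j → j < n →
      f i ≠ f j ∧ (G.Adj (f i) (f j) ↔ j = i + 1 ∨ (i = 0 ∧ j = n - 1)) := by
    intro i j hij hj
    by_cases hjp : j ≤ p.length
    · rw [hfp i (by omega), hfp j hjp, hp.adj_getVert_iff hij hjp]
      exact ⟨(hp hij hjp).1, by omega⟩
    by_cases hip : p.length ≤ i
    · rw [hfq i hip, hfq j (by omega), ne_comm, G.adj_comm,
        hq.adj_getVert_iff (by omega) (by omega)]
      exact ⟨(hq (by omega) (by omega)).1, by omega⟩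
    rw [hfp i (by omega), hfq j (by omega)]
    rcases Nat.eq_zero_or_pos i with rfl | hi0
    · rw [show p.getVert 0 = q.getVert 0 by simp, hq.adj_getVert_iff (by omega) (by omega)]
      exact ⟨(hq (by omega) (by omega)).1, by omega⟩
    · have := hpq hi0 (by omega) (show 0 < n - j by omega) (by omega)
      exact ⟨this.1, by simp only [this.2, false_iff]; omega⟩
  exact not_chordal_of_induced_cycle (n := n) (by omega) f (fun i j hij hj => (key hij hj).1)
    (fun i j hij hj => (key hij hj).2)

end SimpleGraph.Walk

/-- The component of `u` in `G - S`, as a vertex set (empty when `u ∈ S`). -/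
def reachAvoiding (G : SimpleGraph V) (S : Set V) (u : V) : Set V :=
  {x | ∃ p : G.Walk u x, ∀ z ∈ p.support, z ∉ S}

section reachAvoiding

variable {G : SimpleGraph V} {S : Set V} {u : V}

theorem self_mem_reachAvoiding (hu : u ∉ S) : u ∈ reachAvoiding G S u :=
  ⟨.nil, by simpa using hu⟩

theorem mem_reachAvoiding_of_mem_support {x z : V} (p : G.Walk u x)
    (hp : ∀ y ∈ p.support, y ∉ S) (hz : z ∈ p.support) : z ∈ reachAvoiding G S u := by
  classical
  exact ⟨p.takeUntil z hz, fun y hy => hp y (p.support_takeUntil_subset_support hz hy)⟩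

theorem mem_reachAvoiding_of_adj {x y : V} (hx : x ∈ reachAvoiding G S u) (hxy : G.Adj x y)
    (hy : y ∉ S) : y ∈ reachAvoiding G S u := by
  obtain ⟨p, hp⟩ := hx
  refine ⟨p.concat hxy, fun z hz => ?_⟩
  rw [Walk.support_concat, List.mem_append, List.mem_singleton] at hz
  rcases hz with hz | rfl
  exacts [hp z hz, hy]

theorem exists_walk_of_mem_reachAvoiding {x y : V} (hx : x ∈ reachAvoiding G S u)
    (hy : y ∈ reachAvoiding G S u) :
    ∃ p : G.Walk x y, ∀ z ∈ p.support, z ∈ reachAvoiding G S u := by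
  obtain ⟨px, hpx⟩ := hx
  obtain ⟨py, hpy⟩ := hy
  refine ⟨px.reverse.append py, fun z hz => ?_⟩
  rcases (Walk.mem_support_append_iff _ _).1 hz with hz | hz
  · exact mem_reachAvoiding_of_mem_support px hpx (by simpa using hz)
  · exact mem_reachAvoiding_of_mem_support py hpy hz

variable {w : V}

theorem Separates.symm (h : Separates G S u w) : Separates G S w u := fun p => by
  simpa using h p.reverse

theorem Separates.disjoint_reachAvoiding (h : Separates G S u w) :
    Disjoint (reachAvoiding G S u) (reachAvoiding G S w) := by
  refine Set.disjoint_left.2 fun x ⟨p, hp⟩ ⟨q, hq⟩ => ?_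
  obtain ⟨z, hz, hzS⟩ := h (p.append q.reverse)
  rcases (Walk.mem_support_append_iff _ _).1 hz with hz | hz
  · exact hp z hz hzS
  · exact hq z (by simpa using hz) hzS

theorem Separates.ne_and_not_adj {x y : V} (h : Separates G S u w)
    (hx : x ∈ reachAvoiding G S u) (hy : y ∈ reachAvoiding G S w) : x ≠ y ∧ ¬ G.Adj x y := by
  have hyS : y ∉ S := fun hyS => by obtain ⟨p, hp⟩ := hy; exact hp y p.end_mem_support hyS
  have hyu : y ∉ reachAvoiding G S u := Set.disjoint_right.1 h.disjoint_reachAvoiding hy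
  exact ⟨fun hxy => hyu (hxy ▸ hx), fun hadj => hyu (mem_reachAvoiding_of_adj hx hadj hyS)⟩

theorem IsMinUWSeparator.symm (h : IsMinUWSeparator G S u w) : IsMinUWSeparator G S w u := by
  obtain ⟨huw, hadj, hu, hw, hsep, hmin⟩ := h
  exact ⟨huw.symm, fun h => hadj h.symm, hw, hu, hsep.symm, fun S' hS' h => hmin S' hS' h.symm⟩

theorem IsMinUWSeparator.exists_adj_mem_reachAvoiding (h : IsMinUWSeparator G S u w) {s : V}
    (hs : s ∈ S) : ∃ x ∈ reachAvoiding G S u, G.Adj s x := by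
  obtain ⟨-, -, hu, hw, hsep, hmin⟩ := h
  -- By minimality some `u`–`w` walk meets `S` only in `s`; it leaves the component of `u`
  -- through an edge into `s`.
  obtain ⟨p, hp⟩ : ∃ p : G.Walk u w, ∀ z ∈ p.support, z ∈ S → z = s := by
    have := hmin _ (Set.sdiff_singleton_ssubset.2 hs)
    simp only [Separates, not_forall, not_exists, not_and] at this
    obtain ⟨p, hp⟩ := this
    exact ⟨p, fun z hz hzS => by_contra fun hne => hp z hz ⟨hzS, hne⟩⟩
  have hwu : w ∉ reachAvoiding G S u :=
    Set.disjoint_right.1 hsep.disjoint_reachAvoiding (self_mem_reachAvoiding hw)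
  obtain ⟨d, hd, hx, hy⟩ := p.exists_boundary_dart _ (self_mem_reachAvoiding hu) hwu
  have hyS : d.snd ∈ S := by_contra fun hyS => hy (mem_reachAvoiding_of_adj hx d.adj hyS)
  have hys : d.snd = s := hp _ (p.dart_snd_mem_support_of_mem_darts hd) hyS
  exact ⟨d.fst, hx, hys ▸ d.adj.symm⟩

theorem IsMinUWSeparator.exists_isInducedPath (h : IsMinUWSeparator G S u w) {a b : V}
    (ha : a ∈ S) (hb : b ∈ S) : ∃ p : G.Walk a b, p.IsInducedPath ∧
      ∀ ⦃i⦄, 0 < i → i < p.length → p.getVert i ∈ reachAvoiding G S u := by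
  obtain ⟨x, hx, hax⟩ := h.exists_adj_mem_reachAvoiding ha
  obtain ⟨y, hy, hby⟩ := h.exists_adj_mem_reachAvoiding hb
  obtain ⟨q, hq⟩ := exists_walk_of_mem_reachAvoiding hx hy
  let W : G.Walk a b := .cons hax (q.concat hby.symm)
  have hW : ∀ z ∈ W.support, z = a ∨ z = b ∨ z ∈ reachAvoiding G S u := by
    intro z hz
    simp only [W, Walk.support_cons, Walk.support_concat, List.mem_cons, List.mem_append,
      List.not_mem_nil, or_false] at hz
    rcases hz with hz | hz | hz
    exacts [.inl hz, .inr (.inr (hq z hz)), .inr (.inl hz)]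
  obtain ⟨p, hpW, hp⟩ := W.exists_isInducedPath_support_subset
  refine ⟨p, hp, fun i hi0 hi => ?_⟩
  rcases hW _ (hpW (p.getVert_mem_support i)) with hia | hib | hiu
  · exact absurd (p.getVert_zero.trans hia.symm) (hp hi0 hi.le).1
  · exact absurd (hib.trans p.getVert_length.symm) (hp hi le_rfl).1
  · exact hiu

end reachAvoiding

theorem stmt1_general (G : SimpleGraph V) (hG : Chordal G)
    (S : Set V) (hS : IsMinSeparator G S) : G.IsClique S := by
  obtain ⟨u, w, hS⟩ := hS
  have hsep : Separates G S u w := hS.2.2.2.2.1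
  intro a ha b hb hab
  by_contra hnadj
  obtain ⟨p, hp, hpu⟩ := hS.exists_isInducedPath ha hb
  obtain ⟨q, hq, hqw⟩ := hS.symm.exists_isInducedPath ha hb
  refine Walk.not_chordal_of_isInducedPath_of_isInducedPath hp hq hab hnadj ?_ hG
  exact fun i j hi0 hi hj0 hj => hsep.ne_and_not_adj (hpu hi0 hi) (hqw hj0 hj)

theorem stmt1 [Fintype V] (G : SimpleGraph V) (hG : Chordal G)
    (S : Set V) (hS : IsMinSeparator G S) : G.IsClique S :=
  stmt1_general G hG S hS
end

section
/- A finite graph is chordal if and only if it admits a clique tree, i.e., a tree T whose vertices are the maximal cliques of G such that for every vertex v of G, the maximal cliques containing v induce a subtree (connected subgraph) of T. -/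
open SimpleGraph

variable {V : Type*}

/-!
If `G` has a clique tree `T`, root `T` at some clique. For every vertex `x` of `G` the cliques
containing `x` form a subtree, which has a gate: a clique lying on the path from every clique of the
subtree to the root. Along an induced cycle `v₀ … vₙ₋₁` consecutive subtrees meet, and if the gate
of `vᵢ` is a deepest one, the Helly-type argument for subtrees puts it into the subtrees of `vᵢ₋₁`
and `vᵢ₊₁` as well; so `vᵢ₋₁` and `vᵢ₊₁` lie in a common clique, which is impossible when `n ≥ 4`.

Conversely, a chordal graph has a simplicial vertex (Dirac). Indeed, for a component `C` of
`G - N[a]`, the vertices outside `C` with a neighbour in `C` are pairwise adjacent, since a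
shortest path through `C` joining two non-adjacent ones closes up with `a` to an induced cycle of
length at least four; by induction `G[N[C]]` has a simplicial vertex in `C`. If `v` is simplicial,
`N[v]` is the only maximal clique containing `v`, and each maximal clique `R` of `G - v` extends to
the maximal clique `R` or `N[v]` of `G`. Relabelling a clique tree of `G - v` accordingly and, when
`N[v]` is new, attaching it as a leaf at a maximal clique containing `N(v)` gives a clique tree of
`G`.
-/

namespace SimpleGraph

section Paths
variable {G : SimpleGraph V}

lemma cycleGraph_adj_iff_val {n : ℕ} (hn : 2 ≤ n) {i j : Fin n} :
    (cycleGraph n).Adj i j ↔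
      i.1 + 1 = j.1 ∨ j.1 + 1 = i.1 ∨ (i.1 = 0 ∧ j.1 + 1 = n) ∨ (j.1 = 0 ∧ i.1 + 1 = n) := by
  rw [cycleGraph_adj']
  rcases lt_trichotomy i j with h | rfl | h
  · rw [Fin.coe_sub_iff_lt.2 h, Fin.sub_val_of_le h.le, Fin.lt_def] at *
    omega
  · rw [Fin.sub_val_of_le le_rfl]
    omega
  · rw [Fin.coe_sub_iff_lt.2 h, Fin.sub_val_of_le h.le, Fin.lt_def] at *
    omega

lemma Walk.not_adj_getVert_of_length_eq_dist {u v : V} {p : G.Walk u v}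
    (hp : p.length = G.dist u v) {i j : ℕ} (hij : i + 2 ≤ j) (hj : j ≤ p.length) :
    ¬ G.Adj (p.getVert i) (p.getVert j) := fun h => by
  have := G.dist_le ((p.take i).append (.cons h (p.drop j)))
  simp only [Walk.length_append, Walk.take_length, Walk.length_cons, Walk.drop_length] at this
  omega

lemma connected_induce_insert {s : Set V} (hs : (G.induce s).Connected) {x c : V}
    (hc : c ∈ s) (hxc : G.Adj x c) : (G.induce (insert x s)).Connected := by
  rw [← Set.singleton_union]
  exact connected_induce_union (Connected.of_subsingleton).preconnected hs.preconnected rfl hc hxc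

end Paths

section MapSupEdge
variable {α β : Type*} {T : SimpleGraph β}

lemma IsAcyclic.map (ι : β ↪ α) (h : T.IsAcyclic) : (T.map ι).IsAcyclic := by
  intro x c hc
  have hsupp : ∀ y ∈ c.support, y ∈ Set.range (Embedding.map ι T) := fun y hy => by
    obtain ⟨z, -, a, b, -, rfl, -⟩ :=
      (mem_support _).1 (mem_support_of_mem_walk_support c hc.not_nil hy)
    exact ⟨a, rfl⟩
  have hc' : (c.induce _ hsupp).IsCycle := by
    rwa [← Walk.isCycle_map_iff_of_injective (f := (Embedding.induce _).toHom)
      Subtype.val_injective, Walk.map_induce]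
  exact h _ ((Walk.isCycle_map_iff_of_injective (f := (Embedding.map ι T).isoInduceRange.symm.toHom)
    (Embedding.map ι T).isoInduceRange.symm.injective).2 hc')

lemma IsTree.map_sup_edge (hT : T.IsTree) (ι : β ↪ α) {a : α} (b : β)
    (hcover : ∀ x, x ≠ a → x ∈ Set.range ι) (ha : a ∈ Set.range ι → a = ι b) :
    (T.map ι ⊔ edge a (ι b)).IsTree := by
  refine ⟨(connected_iff_exists_forall_reachable _).2 ⟨ι b, fun x => ?_⟩, ?_⟩
  · by_cases hxa : x = a
    · subst hxa
      by_cases hx : x = ι b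
      · rw [hx]
      · exact (Adj.reachable (Or.inr ((edge_adj _ _ _ _).2 ⟨Or.inl ⟨rfl, rfl⟩, hx⟩))).symm
    · obtain ⟨y, rfl⟩ := hcover x hxa
      exact ((hT.connected b y).map (Embedding.map ι T).toHom).mono le_sup_left
  · by_cases har : a ∈ Set.range ι
    · rw [ha har, edge_self_eq_bot, sup_bot_eq]
      exact hT.isAcyclic.map ι
    · refine hT.isAcyclic.map ι |>.sup_edge_of_not_reachable fun h => har ?_
      obtain ⟨w, -, c, d, -, rfl, -⟩ :=
        (mem_support _).1 (mem_support_of_reachable (fun e => har ⟨b, e.symm⟩) h)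
      exact ⟨c, rfl⟩

lemma Connected.induce_image_map {S : Set β} (hS : (T.induce S).Connected) (ι : β ↪ α)
    (H : SimpleGraph α) : ((T.map ι ⊔ H).induce (ι '' S)).Connected := by
  refine hS.map (⟨fun x => ⟨ι x, Set.mem_image_of_mem ι x.2⟩, fun h => Or.inl ?_⟩ : _ →g _) ?_
  · exact (map_adj_apply (f := ι)).2 h
  · rintro ⟨_, x, hx, rfl⟩
    exact ⟨⟨x, hx⟩, rfl⟩

lemma Connected.induce_insert_image_map {S : Set β} (hS : (T.induce S).Connected) (ι : β ↪ α)
    {a : α} {b : β} (hb : b ∈ S) :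
    ((T.map ι ⊔ edge a (ι b)).induce (insert a (ι '' S))).Connected := by
  by_cases hab : a = ι b
  · rw [Set.insert_eq_of_mem (hab ▸ Set.mem_image_of_mem ι hb)]
    exact hS.induce_image_map ι _
  · rw [Set.insert_eq, Set.union_comm]
    exact connected_induce_union (hS.induce_image_map ι _).preconnected
      Connected.of_subsingleton.preconnected (Set.mem_image_of_mem ι hb) rfl
      (Or.inr ((edge_adj _ _ _ _).2 ⟨Or.inr ⟨rfl, rfl⟩, Ne.symm hab⟩))

end MapSupEdge

section Gates
variable {α : Type*} {T : SimpleGraph α}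

lemma Walk.IsPath.append_of_support_inter {u v w : α} {p : T.Walk u v} {q : T.Walk v w}
    (hp : p.IsPath) (hq : q.IsPath) (h : ∀ z ∈ p.support, z ∈ q.support → z = v) :
    (p.append q).IsPath := by
  rw [Walk.isPath_def, Walk.support_append]
  have hqn := hq.support_nodup
  rw [← q.cons_tail_support, List.nodup_cons] at hqn
  refine hp.support_nodup.append hqn.2 fun z hzp hzq => hqn.1 ?_
  have hz : z ∈ v :: q.support.tail := List.mem_cons_of_mem v hzq
  rw [q.cons_tail_support] at hz
  obtain rfl := h z hzp hz
  exact hzq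

namespace IsTree
variable (hT : T.IsTree)
include hT

lemma eq_of_isPath {u v : α} {p q : T.Walk u v} (hp : p.IsPath) (hq : q.IsPath) : p = q :=
  (hT.existsUnique_path u v).unique hp hq

lemma length_eq_dist {u v : α} {p : T.Walk u v} (hp : p.IsPath) : p.length = T.dist u v := by
  obtain ⟨q, hq, hlen⟩ := hT.connected.exists_path_of_dist u v
  rw [← hlen, hT.eq_of_isPath hp hq]

lemma dist_add_dist_of_mem_support {u v y : α} {p : T.Walk u v} (hp : p.IsPath)
    (hy : y ∈ p.support) : T.dist u y + T.dist y v = T.dist u v := by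
  classical
  rw [← hT.length_eq_dist hp, ← hT.length_eq_dist (hp.takeUntil hy),
    ← hT.length_eq_dist (hp.dropUntil hy), ← Walk.length_append, p.take_spec hy]

lemma mem_support_of_dist_add_dist {u v y : α} {p : T.Walk u v} (hp : p.IsPath)
    (h : T.dist u y + T.dist y v = T.dist u v) : y ∈ p.support := by
  obtain ⟨q, -, hq⟩ := hT.connected.exists_path_of_dist u y
  obtain ⟨r, -, hr⟩ := hT.connected.exists_path_of_dist y v
  have hqr : (q.append r).IsPath := (q.append r).isPath_of_length_eq_dist (by
    rw [Walk.length_append, hq, hr, h])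
  rw [hT.eq_of_isPath hp hqr, Walk.mem_support_append_iff]
  exact Or.inl q.end_mem_support

lemma support_subset_of_connected_induce {X : Set α} (hX : (T.induce X).Connected)
    {x y : α} (hx : x ∈ X) (hy : y ∈ X) {p : T.Walk x y} (hp : p.IsPath) :
    ∀ z ∈ p.support, z ∈ X := by
  classical
  obtain ⟨w⟩ := hX ⟨x, hx⟩ ⟨y, hy⟩
  set w' := w.map (Embedding.induce X).toHom
  have hpw : p = w'.bypass := hT.eq_of_isPath hp w'.bypass_isPath
  intro z hz
  obtain ⟨z', -, rfl⟩ :=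
    List.mem_map.1 (Walk.support_map _ _ ▸ w'.support_bypass_subset_support (hpw ▸ hz))
  exact z'.2

lemma exists_gate {X : Set α} (hX : (T.induce X).Connected) (r : α) :
    ∃ b ∈ X, ∀ x ∈ X, T.dist x b + T.dist b r = T.dist x r := by
  classical
  obtain ⟨⟨x₀, hx₀⟩⟩ := hX.nonempty
  obtain ⟨b, ⟨hbX, hbmin⟩⟩ : ∃ b, b ∈ X ∧ ∀ x ∈ X, T.dist b r ≤ T.dist x r := by
    have h : ∃ n, ∃ x ∈ X, T.dist x r = n := ⟨_, x₀, hx₀, rfl⟩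
    obtain ⟨b, hb, hbn⟩ := Nat.find_spec h
    exact ⟨b, hb, fun x hx => hbn ▸ Nat.find_min' h ⟨x, hx, rfl⟩⟩
  refine ⟨b, hbX, fun x hx => ?_⟩
  obtain ⟨p, hp, -⟩ := hT.connected.exists_path_of_dist x b
  obtain ⟨q, hq, -⟩ := hT.connected.exists_path_of_dist b r
  have hpq : (p.append q).IsPath := hp.append_of_support_inter hq fun z hzp hzq => by
    have := hT.dist_add_dist_of_mem_support hq hzq
    have := hbmin z (hT.support_subset_of_connected_induce hX hx hbX hp z hzp)
    exact ((hT.connected.dist_eq_zero_iff).1 (by omega)).symm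
  exact hT.dist_add_dist_of_mem_support hpq
    ((Walk.mem_support_append_iff _ _).2 (Or.inl p.end_mem_support))

lemma gate_mem_of_dist_le {Y : Set α} (hY : (T.induce Y).Connected) {r t b c : α} (htY : t ∈ Y)
    (hb : T.dist t b + T.dist b r = T.dist t r) (hcY : c ∈ Y)
    (hc : T.dist t c + T.dist c r = T.dist t r) (hd : T.dist c r ≤ T.dist b r) : b ∈ Y := by
  classical
  obtain ⟨p, hp, -⟩ := hT.connected.exists_path_of_dist t r
  have hcp := hT.mem_support_of_dist_add_dist hp hc
  have hbp : b ∈ ((p.takeUntil c hcp).append (p.dropUntil c hcp)).support :=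
    (p.take_spec hcp).symm ▸ hT.mem_support_of_dist_add_dist hp hb
  rcases (Walk.mem_support_append_iff _ _).1 hbp with h | h
  · exact hT.support_subset_of_connected_induce hY htY hcY (hp.takeUntil hcp) b h
  · have := hT.dist_add_dist_of_mem_support (hp.dropUntil hcp) h
    rwa [← (hT.connected.dist_eq_zero_iff).1 (show T.dist c b = 0 by omega)]

end IsTree
end Gates

end SimpleGraph

section Cliques
variable {G : SimpleGraph V}

lemma SimpleGraph.IsClique.exists_isMaxClique_superset [Finite V] {s : Set V}
    (hs : G.IsClique s) : ∃ Q, IsMaxClique G Q ∧ s ⊆ Q := by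
  obtain ⟨Q, hsQ, hQ, hmax⟩ := (Set.toFinite {t | G.IsClique t}).exists_le_maximal hs
  exact ⟨Q, ⟨hQ, fun t ht h => h.antisymm (hmax ht h)⟩, hsQ⟩

lemma SimpleGraph.IsClique.preimage_val {Q : Set V} (hQ : G.IsClique Q) (s : Set V) :
    (G.induce s).IsClique (Subtype.val ⁻¹' Q) :=
  isClique_induce_iff.2 (hQ.subset (Set.image_preimage_subset _ _))

lemma IsMaxClique.preimage_val {Q s : Set V} (hQ : IsMaxClique G Q) (hQs : Q ⊆ s) :
    IsMaxClique (G.induce s) (Subtype.val ⁻¹' Q) := by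
  refine ⟨hQ.1.preimage_val s, fun t ht hsub => ?_⟩
  rw [hQ.2 _ (isClique_induce_iff.1 ht) fun x hx => ⟨⟨x, hQs hx⟩, hsub hx, rfl⟩,
    Set.preimage_image_eq _ Subtype.val_injective]

variable {v : V}

lemma isClique_Qv (hv : IsSimplicial G v) : G.IsClique (Qv G v) := by
  rintro x (rfl | hx) y (rfl | hy) hxy
  exacts [absurd rfl hxy, hy, hx.symm, hv hx hy hxy]

lemma eq_Qv_of_mem {Q : Set V} (hv : IsSimplicial G v) (hQ : IsMaxClique G Q) (hvQ : v ∈ Q) :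
    Q = Qv G v :=
  hQ.2 _ (isClique_Qv hv) fun u hu =>
    (eq_or_ne u v).elim (fun h => h ▸ Set.mem_insert _ _) fun h => Or.inr (hQ.1 hvQ hu h.symm)

lemma isMaxClique_Qv (hv : IsSimplicial G v) : IsMaxClique G (Qv G v) := by
  refine ⟨isClique_Qv hv, fun t ht hsub => hsub.antisymm fun u hu => ?_⟩
  rcases eq_or_ne u v with rfl | huv
  exacts [Set.mem_insert _ _, Or.inr (ht (hsub (Set.mem_insert _ _)) hu huv.symm)]

lemma IsMaxClique.image_val {R : Set ({v}ᶜ : Set V)} (hR : IsMaxClique (G.induce {v}ᶜ) R)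
    (hRv : ¬ Subtype.val '' R ⊆ G.neighborSet v) : IsMaxClique G (Subtype.val '' R) := by
  refine ⟨isClique_induce_iff.1 hR.1, fun t ht hsub => ?_⟩
  have hvt : v ∉ t := fun hvt => hRv fun x hx =>
    ht hvt (hsub hx) (by obtain ⟨y, -, rfl⟩ := hx; exact Ne.symm y.2)
  rw [hR.2 _ (ht.preimage_val _) fun x hx => hsub ⟨x, hx, rfl⟩, Subtype.image_preimage_coe]
  exact Set.inter_eq_right.2 fun x hx => ne_of_mem_of_not_mem hx hvt

open scoped Classical in
/-- The maximal clique of `G` containing a maximal clique `R` of `G - v`. -/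
noncomputable def liftMaxClique (hv : IsSimplicial G v) (R : MaxCliques (G.induce {v}ᶜ)) :
    MaxCliques G :=
  if h : Subtype.val '' R.1 ⊆ G.neighborSet v then ⟨Qv G v, isMaxClique_Qv hv⟩
  else ⟨_, R.2.image_val h⟩

lemma mem_liftMaxClique (hv : IsSimplicial G v) (R : MaxCliques (G.induce {v}ᶜ)) {u : V}
    (hu : u ≠ v) : u ∈ (liftMaxClique hv R).1 ↔ (⟨u, hu⟩ : ({v}ᶜ : Set V)) ∈ R.1 := by
  unfold liftMaxClique
  split_ifs with h
  · have hR : R.1 = Subtype.val ⁻¹' G.neighborSet v :=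
      R.2.2 _ (IsClique.preimage_val hv _) fun x hx => h ⟨x, hx, rfl⟩
    simp [hR, Qv, hu]
  · exact ⟨fun ⟨x, hx, hxu⟩ => by subst hxu; exact hx, fun h => ⟨_, h, rfl⟩⟩

lemma liftMaxClique_injective (hv : IsSimplicial G v) : Function.Injective (liftMaxClique hv) := by
  intro R S h
  ext ⟨u, hu⟩
  rw [← mem_liftMaxClique hv R hu, ← mem_liftMaxClique hv S hu, h]

lemma mem_range_liftMaxClique (hv : IsSimplicial G v) {Q : MaxCliques G}
    (hQ : Q ≠ ⟨Qv G v, isMaxClique_Qv hv⟩) : Q ∈ Set.range (liftMaxClique hv) := by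
  have hvQ : v ∉ Q.1 := fun h => hQ (Subtype.ext (eq_Qv_of_mem hv Q.2 h))
  let R : MaxCliques (G.induce {v}ᶜ) :=
    ⟨_, Q.2.preimage_val fun u hu => ne_of_mem_of_not_mem hu hvQ⟩
  refine ⟨R, Subtype.ext (Q.2.2 _ (liftMaxClique hv R).2.1 fun u hu => ?_).symm⟩
  exact (mem_liftMaxClique hv R (ne_of_mem_of_not_mem hu hvQ)).2 hu

lemma eq_liftMaxClique_of_mem_range (hv : IsSimplicial G v) {R₁ : MaxCliques (G.induce {v}ᶜ)}
    (hR₁ : Subtype.val ⁻¹' G.neighborSet v ⊆ R₁.1)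
    (h : ⟨Qv G v, isMaxClique_Qv hv⟩ ∈ Set.range (liftMaxClique hv)) :
    ⟨Qv G v, isMaxClique_Qv hv⟩ = liftMaxClique hv R₁ := by
  obtain ⟨R, hR⟩ := h
  have hRR₁ : R.1 ⊆ R₁.1 := fun ⟨u, hu⟩ hur => hR₁ <| by
    have := (mem_liftMaxClique hv R hu).2 hur
    rw [hR] at this
    exact this.resolve_left hu
  rw [← hR, Subtype.ext (R.2.2 _ R₁.2.1 hRR₁)]

lemma mem_iff_eq_Qv_or_mem_liftMaxClique (hv : IsSimplicial G v) {u : V} (huv : u ≠ v)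
    (Q : MaxCliques G) : u ∈ Q.1 ↔ (Q = ⟨Qv G v, isMaxClique_Qv hv⟩ ∧ u ∈ G.neighborSet v) ∨
      ∃ R : MaxCliques (G.induce {v}ᶜ), ⟨u, huv⟩ ∈ R.1 ∧ liftMaxClique hv R = Q := by
  by_cases hQ : Q = ⟨Qv G v, isMaxClique_Qv hv⟩
  · subst hQ
    refine ⟨fun h => Or.inl ⟨rfl, h.resolve_left huv⟩, ?_⟩
    rintro (⟨-, h⟩ | ⟨R, hR, hRQ⟩)
    · exact Or.inr h
    · exact hRQ ▸ (mem_liftMaxClique hv R huv).2 hR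
  · obtain ⟨R, rfl⟩ := mem_range_liftMaxClique hv hQ
    simp only [hQ, false_and, false_or, mem_liftMaxClique hv R huv,
      (liftMaxClique_injective hv).eq_iff, exists_eq_right]

lemma IsCliqueTree.exists_of_induce_compl [Finite V] (hv : IsSimplicial G v)
    {T' : SimpleGraph (MaxCliques (G.induce {v}ᶜ))} (hT' : IsCliqueTree (G.induce {v}ᶜ) T') :
    ∃ T, IsCliqueTree G T := by
  obtain ⟨R₁, hR₁, hNR₁⟩ := (IsClique.preimage_val hv {v}ᶜ).exists_isMaxClique_superset
  let ι : MaxCliques (G.induce {v}ᶜ) ↪ MaxCliques G := ⟨_, liftMaxClique_injective hv⟩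
  let Qm : MaxCliques G := ⟨Qv G v, isMaxClique_Qv hv⟩
  refine ⟨T'.map ι ⊔ edge Qm (ι ⟨R₁, hR₁⟩), hT'.1.map_sup_edge ι ⟨R₁, hR₁⟩
    (fun Q hQ => mem_range_liftMaxClique hv hQ) (eq_liftMaxClique_of_mem_range hv hNR₁),
    fun u => ?_⟩
  by_cases huv : u = v
  · have hset : {Q : MaxCliques G | u ∈ Q.1} = {Qm} := Set.ext fun Q =>
      ⟨fun h => Subtype.ext (eq_Qv_of_mem hv Q.2 (huv ▸ h)), fun h => h ▸ huv ▸ Set.mem_insert _ _⟩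
    rw [hset]
    exact Connected.of_subsingleton
  have hS := hT'.2 ⟨u, huv⟩
  by_cases hu : u ∈ G.neighborSet v
  · have hset : {Q : MaxCliques G | u ∈ Q.1} = insert Qm (ι '' {R | ⟨u, huv⟩ ∈ R.1}) :=
      Set.ext fun Q => by simp [mem_iff_eq_Qv_or_mem_liftMaxClique hv huv, hu, Qm, ι]
    exact hset ▸ hS.induce_insert_image_map ι (hNR₁ hu)
  · have hset : {Q : MaxCliques G | u ∈ Q.1} = ι '' {R | ⟨u, huv⟩ ∈ R.1} :=
      Set.ext fun Q => by simp [mem_iff_eq_Qv_or_mem_liftMaxClique hv huv, hu, ι]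
    exact hset ▸ hS.induce_image_map ι _

end Cliques

section Chordal
variable {G : SimpleGraph V}

lemma Chordal.induce (hG : Chordal G) (s : Set V) : Chordal (G.induce s) :=
  fun n hn => ⟨fun f => (hG n hn).false ((Embedding.induce s).comp f)⟩

lemma Chordal.false_of_chordless_cycle (hG : Chordal G) {n : ℕ} (hn : 4 ≤ n) (g : ℕ → V)
    (hadj : ∀ i, i + 1 < n → G.Adj (g i) (g (i + 1)))
    (hwrap : G.Adj (g (n - 1)) (g 0))
    (hchord : ∀ i j, i + 2 ≤ j → j < n → (i = 0 → j + 1 ≠ n) → ¬ G.Adj (g i) (g j))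
    (hinj : ∀ i j, i < j → j < n → g i ≠ g j) : False := by
  have hinj' : Function.Injective fun i : Fin n => g i := by
    intro i j h
    by_contra hne
    rcases Nat.lt_or_gt_of_ne (Fin.val_ne_of_ne hne) with hlt | hlt
    · exact hinj _ _ hlt j.2 h
    · exact hinj _ _ hlt i.2 h.symm
  refine (hG n hn).false ⟨⟨_, hinj'⟩, fun {i j} => ?_⟩
  simp only [Function.Embedding.coeFn_mk, cycleGraph_adj_iff_val (by omega : 2 ≤ n)]
  constructor
  · intro h
    by_contra hc
    rcases lt_trichotomy i.1 j.1 with hlt | he | hgt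
    · exact hchord _ _ (by omega) j.2 (by omega) h
    · exact h.ne (congrArg g he)
    · exact hchord _ _ (by omega) i.2 (by omega) h.symm
  · rintro (h | h | ⟨hi, hj⟩ | ⟨hj, hi⟩)
    · exact h ▸ hadj _ (by omega)
    · exact (h ▸ hadj _ (by omega)).symm
    · rw [hi, show j.1 = n - 1 by omega]; exact hwrap.symm
    · rw [hj, show i.1 = n - 1 by omega]; exact hwrap

lemma Chordal.exists_adj_getVert (hG : Chordal G) {x y z : V} {p : G.Walk x y} (hp : p.IsPath)
    (hlen : 2 ≤ p.length)
    (hchord : ∀ i j, i + 2 ≤ j → j ≤ p.length → ¬ G.Adj (p.getVert i) (p.getVert j))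
    (hz : z ∉ p.support) (hzx : G.Adj z x) (hzy : G.Adj z y) :
    ∃ i, 0 < i ∧ i < p.length ∧ G.Adj z (p.getVert i) := by
  by_contra! hzi
  set m := p.length
  have hzne : ∀ i ≤ m, p.getVert i ≠ z := fun i _ h => hz (h ▸ p.getVert_mem_support i)
  refine hG.false_of_chordless_cycle (n := m + 2) (by omega)
    (fun i => if i ≤ m then p.getVert i else z) (fun i hi => ?_) ?_ (fun i j hij hj hwrap => ?_)
    (fun i j hij hj => ?_)
  · rcases Nat.lt_or_ge i m with h | h
    · simpa [h.le, Nat.succ_le_of_lt h] using p.adj_getVert_succ h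
    · simpa [show i = m by omega, m] using hzy.symm
  · simpa [m] using hzx
  · rcases Nat.lt_or_ge j (m + 1) with h | h
    · simpa [show i ≤ m by omega, show j ≤ m by omega] using hchord i j hij (by omega)
    · simpa [show i ≤ m by omega, show ¬ j ≤ m by omega] using
        fun h => hzi i (by omega) (by omega) h.symm
  · rcases Nat.lt_or_ge j (m + 1) with h | h
    · simpa [show i ≤ m by omega, show j ≤ m by omega] using
        fun h => hij.ne (hp.getVert_injOn (by simp; omega) (by simp; omega) h)
    · simpa [show i ≤ m by omega, show ¬ j ≤ m by omega] using hzne i (by omega)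

-- Two non-adjacent such vertices would be joined by a shortest path through `C`, which closes up
-- with `v` to an induced cycle of length at least four.
lemma Chordal.isClique_boundary (hG : Chordal G) {v : V} {C : Set V}
    (hC : (G.induce C).Connected) (hCv : ∀ c ∈ C, c ∉ Qv G v)
    (hclosed : ∀ c ∈ C, ∀ x ∉ C, G.Adj c x → G.Adj v x) :
    G.IsClique {x | x ∉ C ∧ ∃ c ∈ C, G.Adj c x} := by
  rintro x ⟨hxC, c, hc, hcx⟩ y ⟨hyC, d, hd, hdy⟩ hxy
  by_contra hnadj
  set E := insert x (insert y C)
  have hE : (G.induce E).Connected :=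
    connected_induce_insert (connected_induce_insert hC hd hdy.symm) (Or.inr hc) hcx.symm
  obtain ⟨p, hp⟩ := hE.exists_walk_length_eq_dist ⟨x, Or.inl rfl⟩ ⟨y, Or.inr (Or.inl rfl)⟩
  have hpath := p.isPath_of_length_eq_dist hp
  have hlen : 1 < p.length :=
    hp ▸ hE.one_lt_dist_of_ne_of_not_adj (fun h => hxy (congrArg Subtype.val h)) hnadj
  set q := p.map (Embedding.induce E).toHom
  have hq : ∀ i, q.getVert i = (p.getVert i).1 := fun i => Walk.getVert_map _ _ _
  have hqlen : q.length = p.length := Walk.length_map _ _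
  have hvE : v ∉ q.support := by
    rw [Walk.support_map, List.mem_map]
    rintro ⟨⟨w, (rfl | rfl | hw)⟩, -, rfl⟩
    exacts [G.loopless.irrefl _ (hclosed c hc _ hxC hcx),
      G.loopless.irrefl _ (hclosed d hd _ hyC hdy), hCv _ hw (Set.mem_insert _ _)]
  obtain ⟨i, hi0, hil, hvi⟩ := hG.exists_adj_getVert (p := q) (hpath.map Subtype.val_injective)
    (by omega) (fun i j hij hj => by
      rw [hq, hq]; exact p.not_adj_getVert_of_length_eq_dist hp hij (by omega))
    hvE (hclosed c hc _ hxC hcx) (hclosed d hd _ hyC hdy)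
  rw [hqlen] at hil
  rw [hq] at hvi
  rcases (p.getVert i).2 with h | h | h
  · exact hi0.ne' (hpath.getVert_injOn (by simp; omega) (by simp)
      ((Subtype.ext h).trans p.getVert_zero.symm))
  · exact hil.ne (hpath.getVert_injOn (by simp; omega) (by simp)
      ((Subtype.ext h).trans p.getVert_length.symm))
  · exact hCv _ h (Or.inr hvi)

lemma exists_component [Finite V] (G : SimpleGraph V) {v w : V} (hw : w ∉ Qv G v) :
    ∃ C : Set V, w ∈ C ∧ (G.induce C).Connected ∧ (∀ c ∈ C, c ∉ Qv G v) ∧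
      ∀ c ∈ C, ∀ x ∉ C, G.Adj c x → G.Adj v x := by
  obtain ⟨C, ⟨hwC, hC, hCv⟩, hmax⟩ := (Set.toFinite
    {C : Set V | w ∈ C ∧ (G.induce C).Connected ∧ ∀ c ∈ C, c ∉ Qv G v}).exists_maximal
    ⟨{w}, rfl, Connected.of_subsingleton, by simpa using hw⟩
  refine ⟨C, hwC, hC, hCv, fun c hc x hxC hcx => ?_⟩
  by_cases hx : x ∈ Qv G v
  · rcases hx with rfl | hx
    exacts [absurd (Or.inr hcx.symm) (hCv c hc), hx]
  refine absurd (hmax ⟨Or.inr hwC, connected_induce_insert hC hc hcx.symm, ?_⟩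
    (Set.subset_insert x C) (Set.mem_insert x C)) hxC
  rintro y (rfl | hy)
  exacts [hx, hCv y hy]

lemma IsSimplicial.of_induce {s : Set V} {x : s} (hx : G.neighborSet x ⊆ s)
    (h : IsSimplicial (G.induce s) x) : IsSimplicial G x := by
  intro y hy z hz hyz
  exact h (show (G.induce s).Adj x ⟨y, hx hy⟩ from hy) (show (G.induce s).Adj x ⟨z, hx hz⟩ from hz)
    (fun h => hyz (congrArg Subtype.val h))

-- `ih` is Dirac's theorem for `G[N[C]]`, where `C` is the component of `w` in `G - N[a]`: as
-- `N(C)` is a clique, one of its two simplicial vertices lies in `C`, where neighbourhoods are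
-- those of `G`.
lemma Chordal.exists_isSimplicial_not_mem_Qv [Finite V] (hG : Chordal G) {a w : V}
    (hw : w ∉ Qv G a)
    (ih : ∀ s : Set V, a ∉ s → G.induce s = ⊤ ∨ ∃ x y : s, x ≠ y ∧ ¬ (G.induce s).Adj x y ∧
      IsSimplicial (G.induce s) x ∧ IsSimplicial (G.induce s) y) :
    ∃ s, s ∉ Qv G a ∧ IsSimplicial G s := by
  obtain ⟨C, hwC, hC, hCa, hclosed⟩ := exists_component G hw
  set D : Set V := {x | x ∈ C ∨ ∃ c ∈ C, G.Adj c x}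
  have haD : a ∉ D := by
    rintro (h | ⟨c, hc, hca⟩)
    · exact hCa a h (Set.mem_insert a _)
    · exact hCa c hc (Or.inr hca.symm)
  suffices ∃ c : D, c.1 ∈ C ∧ IsSimplicial (G.induce D) c by
    obtain ⟨c, hc, hsimp⟩ := this
    exact ⟨c, hCa c hc, hsimp.of_induce fun x hx => Or.inr ⟨c, hc, hx⟩⟩
  rcases ih D haD with htop | ⟨x, y, hxy, hnadj, hx, hy⟩
  · exact ⟨⟨w, Or.inl hwC⟩, hwC, htop ▸ fun _ _ _ _ h => h⟩
  · by_contra! hsimp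
    have hbdry : ∀ z : D, IsSimplicial (G.induce D) z → z.1 ∈ {x | x ∉ C ∧ ∃ c ∈ C, G.Adj c x} :=
      fun z hz => have hzC : z.1 ∉ C := fun h => hsimp z h hz; ⟨hzC, z.2.resolve_left hzC⟩
    exact hnadj (hG.isClique_boundary hC hCa hclosed (hbdry x hx) (hbdry y hy)
      (fun h => hxy (Subtype.ext h)))

theorem Chordal.eq_top_or_exists_isSimplicial [Finite V] (hG : Chordal G) :
    G = ⊤ ∨ ∃ a b, a ≠ b ∧ ¬ G.Adj a b ∧ IsSimplicial G a ∧ IsSimplicial G b := by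
  induction hn : Nat.card V using Nat.strong_induction_on generalizing V with
  | _ n ih =>
  by_cases htop : G = ⊤
  · exact Or.inl htop
  obtain ⟨a, b, hab, hnadj⟩ : ∃ a b, a ≠ b ∧ ¬ G.Adj a b := by
    by_contra! h
    refine htop (SimpleGraph.ext ?_)
    ext x y
    exact ⟨G.ne_of_adj, h x y⟩
  have ih' := fun c (s : Set V) (hc : c ∉ s) =>
    ih _ (hn ▸ Finite.card_subtype_lt hc) (hG.induce s) rfl
  obtain ⟨s, hs, hsimp⟩ := hG.exists_isSimplicial_not_mem_Qv (a := a) (w := b) (by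
    rintro (rfl | h); exacts [hab rfl, hnadj h]) (ih' a)
  obtain ⟨t, ht, htsimp⟩ := hG.exists_isSimplicial_not_mem_Qv (a := s) (w := a) (by
    rintro (rfl | h); exacts [hs (Set.mem_insert _ _), hs (Or.inr h.symm)]) (ih' s)
  exact Or.inr ⟨s, t, fun h => ht (h ▸ Set.mem_insert _ _), fun h => ht (Or.inr h), hsimp, htsimp⟩

theorem Chordal.exists_isSimplicial [Finite V] [Nonempty V] (hG : Chordal G) :
    ∃ v, IsSimplicial G v := by
  rcases hG.eq_top_or_exists_isSimplicial with rfl | ⟨a, -, -, -, ha, -⟩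
  · exact ⟨Classical.arbitrary V, fun _ _ _ _ h => h⟩
  · exact ⟨a, ha⟩

end Chordal

section CliqueTree
variable {G : SimpleGraph V}

lemma isCliqueTree_bot [IsEmpty V] (G : SimpleGraph V) : IsCliqueTree G ⊥ := by
  have : Unique (MaxCliques G) :=
    { default := ⟨∅, Set.pairwise_empty _, fun t _ _ => (Set.eq_empty_of_isEmpty t).symm⟩
      uniq := fun Q => Subtype.ext (Set.eq_empty_of_isEmpty _) }
  exact ⟨IsTree.of_subsingleton, isEmptyElim⟩

theorem Chordal.exists_isCliqueTree [Finite V] (hG : Chordal G) :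
    ∃ T : SimpleGraph (MaxCliques G), IsCliqueTree G T := by
  induction hn : Nat.card V using Nat.strong_induction_on generalizing V with
  | _ n ih =>
  cases isEmpty_or_nonempty V
  · exact ⟨⊥, isCliqueTree_bot G⟩
  obtain ⟨v, hv⟩ := hG.exists_isSimplicial
  obtain ⟨T', hT'⟩ := ih _ (hn ▸ Finite.card_subtype_lt (x := v) (by simp)) (hG.induce {v}ᶜ) rfl
  exact hT'.exists_of_induce_compl hv

lemma exists_maxClique_of_adj [Finite V] {u w : V} (h : G.Adj u w) :
    ∃ Q : MaxCliques G, u ∈ Q.1 ∧ w ∈ Q.1 := by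
  obtain ⟨Q, hQ, huw⟩ := (isClique_pair.2 fun _ => h).exists_isMaxClique_superset
  exact ⟨⟨Q, hQ⟩, huw (Set.mem_insert _ _), huw (Set.mem_insert_of_mem _ rfl)⟩

theorem IsCliqueTree.chordal [Finite V] {T : SimpleGraph (MaxCliques G)} (hT : IsCliqueTree G T) :
    Chordal G := by
  intro n hn
  obtain ⟨m, rfl⟩ : ∃ m, n = m + 4 := ⟨n - 4, by omega⟩
  refine ⟨fun f => ?_⟩
  have hsucc : ∀ i, G.Adj (f i) (f (i + 1)) :=
    fun i => f.map_rel_iff.2 (by rw [cycleGraph_adj]; simp)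
  choose t ht using fun i => exists_maxClique_of_adj (hsucc i)
  choose b hbX hb using fun i => hT.1.exists_gate (hT.2 (f i)) (t 0)
  obtain ⟨i, -, hi⟩ :=
    Finset.univ.exists_max_image (fun i => T.dist (b i) (t 0)) Finset.univ_nonempty
  have hnext : f (i + 1) ∈ (b i).1 := hT.1.gate_mem_of_dist_le (hT.2 _) (ht i).2
    (hb i _ (ht i).1) (hbX _) (hb _ _ (ht i).2) (hi _ (Finset.mem_univ _))
  have hi_prev : f i ∈ (t (i - 1)).1 := by simpa using (ht (i - 1)).2
  have hprev : f (i - 1) ∈ (b i).1 := hT.1.gate_mem_of_dist_le (hT.2 _) (ht (i - 1)).1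
    (hb i _ hi_prev) (hbX _) (hb _ _ (ht (i - 1)).1)
    (hi _ (Finset.mem_univ _))
  have hnot : i - 1 ≠ i + 1 ∧ ¬ (cycleGraph (m + 4)).Adj (i - 1) (i + 1) := by
    rw [cycleGraph_adj_iff_val (by omega), Ne, Fin.ext_iff, Fin.val_add_one, Fin.coe_sub_one]
    have := i.2
    simp only [Fin.ext_iff, Fin.val_last, Fin.val_zero]
    split_ifs <;> simp <;> omega
  exact hnot.2 (f.map_rel_iff.1 ((b i).2.1 hprev hnext (f.injective.ne hnot.1)))

end CliqueTree

theorem stmt6_general [Fintype V] (G : SimpleGraph V) :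
    Chordal G ↔ ∃ T : SimpleGraph (MaxCliques G), IsCliqueTree G T :=
  ⟨Chordal.exists_isCliqueTree, fun ⟨_, hT⟩ => hT.chordal⟩

theorem stmt6 [Fintype V] [Nonempty V] (G : SimpleGraph V) :
    Chordal G ↔ ∃ T : SimpleGraph (MaxCliques G), IsCliqueTree G T :=
  stmt6_general G
end
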